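/- Let the bipartite graph consist of components each complete bipartite with component-wise supply equal to demand, all demands and supplies nonnegative. Then after any prefix of any trading session, within each component the remaining total supply equals the remaining total demand, and if some buyer in a component has positive remaining demand then some seller in that component has positive remaining supply and is linked to that buyer. -/

import Mathlib

open scoped Classical

/-- A trading state: current demands of buyers and supplies of sellers. -/
structure TState (B S : Type*) where
  dem : B → ℝ
  sup : S → ℝ

/-- One trade on link `(b, s)`: the maximal amount `min (dem b) (sup s)` is
transferred, leaving demand `max 0 (dem b - sup s)` and supply
`max 0 (sup s - dem b)`; all other values are unchanged. -/
def trade {B S : Type*} [DecidableEq B] [DecidableEq S]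
    (st : TState B S) (l : B × S) : TState B S where
  dem := Function.update st.dem l.1 (max 0 (st.dem l.1 - st.sup l.2))
  sup := Function.update st.sup l.2 (max 0 (st.sup l.2 - st.dem l.1))

/-- Execute a sequence of trades in order. -/
def runSession {B S : Type*} [DecidableEq B] [DecidableEq S]
    (st : TState B S) (seq : List (B × S)) : TState B S :=
  seq.foldl trade st

/-- The bipartite graph on `B ⊕ S` induced by the link set `L`. -/
def linkGraph {B S : Type*} (L : Finset (B × S)) : SimpleGraph (B ⊕ S) where
  Adj v w := ∃ p ∈ L, (v = Sum.inl p.1 ∧ w = Sum.inr p.2) ∨ (v = Sum.inr p.2 ∧ w = Sum.inl p.1)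
  symm := ⟨by rintro v w ⟨p, hp, h | h⟩ <;> exact ⟨p, hp, by tauto⟩⟩
  loopless := ⟨by rintro v ⟨p, hp, ⟨rfl, h⟩ | ⟨rfl, h⟩⟩ <;> simp_all⟩

/-!
A trade on a link `(b, s)` lowers the demand of `b` and the supply of `s` by the same amount
`min (dem b) (sup s)`, and `b`, `s` lie in the same component, so the demand-minus-supply
imbalance of every component is invariant; demands also stay nonnegative. If a buyer `b` still
has positive demand, the total remaining supply of its component is therefore positive, so some
seller `s` of the component has positive supply, and completeness of the component links `b`
to `s`.
-/

namespace TState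

variable {B S : Type*}

def imbalance (st : TState B S) (Bs : Finset B) (Ss : Finset S) : ℝ :=
  ∑ b ∈ Bs, st.dem b - ∑ s ∈ Ss, st.sup s

end TState

theorem max_zero_sub_sub_self (a b : ℝ) : max 0 (a - b) - a = max 0 (b - a) - b := by
  rcases le_total a b with h | h
  · rw [max_eq_left (by linarith), max_eq_right (by linarith)]; ring
  · rw [max_eq_right (by linarith), max_eq_left (by linarith)]; ring

section Session

variable {B S : Type*} [DecidableEq B] [DecidableEq S]

theorem runSession_cons (st : TState B S) (l : B × S) (seq : List (B × S)) :
    runSession st (l :: seq) = runSession (trade st l) seq :=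
  rfl

theorem trade_dem_nonneg {st : TState B S} (h : ∀ b, 0 ≤ st.dem b) (l : B × S) (b : B) :
    0 ≤ (trade st l).dem b := by
  rcases eq_or_ne b l.1 with rfl | hne
  · simp only [trade, Function.update_self, le_max_left]
  · simpa only [trade, Function.update_of_ne hne] using h b

theorem runSession_dem_nonneg {st : TState B S} (h : ∀ b, 0 ≤ st.dem b) (seq : List (B × S))
    (b : B) : 0 ≤ (runSession st seq).dem b := by
  induction seq generalizing st with
  | nil => exact h b
  | cons l seq ih => exact ih (trade_dem_nonneg h l)

theorem imbalance_trade {Bs : Finset B} {Ss : Finset S} {l : B × S} (hl : l.1 ∈ Bs ↔ l.2 ∈ Ss)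
    (st : TState B S) : (trade st l).imbalance Bs Ss = st.imbalance Bs Ss := by
  simp only [TState.imbalance, trade]
  by_cases hb : l.1 ∈ Bs
  · have hs := hl.mp hb
    rw [Finset.sum_update_of_mem hb, Finset.sum_update_of_mem hs,
      Finset.sum_eq_add_sum_sdiff_singleton_of_mem hb,
      Finset.sum_eq_add_sum_sdiff_singleton_of_mem hs]
    linarith [max_zero_sub_sub_self (st.dem l.1) (st.sup l.2)]
  · rw [Finset.sum_update_of_notMem hb, Finset.sum_update_of_notMem (mt hl.mpr hb)]

theorem imbalance_runSession {Bs : Finset B} {Ss : Finset S} {seq : List (B × S)}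
    (h : ∀ l ∈ seq, l.1 ∈ Bs ↔ l.2 ∈ Ss) (st : TState B S) :
    (runSession st seq).imbalance Bs Ss = st.imbalance Bs Ss := by
  induction seq generalizing st with
  | nil => rfl
  | cons l seq ih =>
    rw [runSession_cons, ih (fun l' hl' => h l' (List.mem_cons_of_mem _ hl')),
      imbalance_trade (h l List.mem_cons_self)]

end Session

theorem TState.exists_sup_pos {B S : Type*} {st : TState B S} {Bs : Finset B} {Ss : Finset S}
    (hdem : ∀ b, 0 ≤ st.dem b) (hbal : ∑ b ∈ Bs, st.dem b = ∑ s ∈ Ss, st.sup s) {b : B}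
    (hb : b ∈ Bs) (hpos : 0 < st.dem b) : ∃ s ∈ Ss, 0 < st.sup s := by
  have hlt : ∑ s ∈ Ss, (0 : ℝ) < ∑ s ∈ Ss, st.sup s := by
    rw [Finset.sum_const_zero, ← hbal]
    exact hpos.trans_le (Finset.single_le_sum (fun b' _ => hdem b') hb)
  exact Finset.exists_lt_of_sum_lt hlt

section LinkGraph

variable {B S : Type*} {L : Finset (B × S)}

theorem linkGraph_reachable_inl_iff_inr {p : B × S} (hp : p ∈ L) (v : B ⊕ S) :
    (linkGraph L).Reachable v (Sum.inl p.1) ↔ (linkGraph L).Reachable v (Sum.inr p.2) :=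
  have hadj : (linkGraph L).Adj (Sum.inl p.1) (Sum.inr p.2) := ⟨p, hp, Or.inl ⟨rfl, rfl⟩⟩
  ⟨fun h => h.trans hadj.reachable, fun h => h.trans hadj.symm.reachable⟩

theorem runSession_component_balanced [Fintype B] [Fintype S] [DecidableEq B] [DecidableEq S]
    {seq : List (B × S)} (hsub : ∀ p ∈ seq, p ∈ L) {st : TState B S} (v : B ⊕ S)
    (hbal : ∑ b ∈ Finset.univ.filter (fun b => (linkGraph L).Reachable v (Sum.inl b)), st.dem b
      = ∑ s ∈ Finset.univ.filter (fun s => (linkGraph L).Reachable v (Sum.inr s)), st.sup s) :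
    ∑ b ∈ Finset.univ.filter (fun b => (linkGraph L).Reachable v (Sum.inl b)),
        (runSession st seq).dem b
      = ∑ s ∈ Finset.univ.filter (fun s => (linkGraph L).Reachable v (Sum.inr s)),
        (runSession st seq).sup s := by
  have h := imbalance_runSession
    (Bs := Finset.univ.filter (fun b => (linkGraph L).Reachable v (Sum.inl b)))
    (Ss := Finset.univ.filter (fun s => (linkGraph L).Reachable v (Sum.inr s)))
    (fun l hl => by simpa using linkGraph_reachable_inl_iff_inr (hsub l hl) v) st
  simp only [TState.imbalance] at h
  linarith

end LinkGraph

theorem stmt_14_general {B S : Type*} [Fintype B] [Fintype S] [DecidableEq B] [DecidableEq S]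
    (L : Finset (B × S)) (D : B → ℝ) (Sup : S → ℝ)
    (hD : ∀ b, 0 ≤ D b)
    (hbal : ∀ v : B ⊕ S,
      ∑ b ∈ Finset.univ.filter (fun b => (linkGraph L).Reachable v (Sum.inl b)), D b
        = ∑ s ∈ Finset.univ.filter (fun s => (linkGraph L).Reachable v (Sum.inr s)), Sup s)
    (hcb : ∀ b s, (linkGraph L).Reachable (Sum.inl b) (Sum.inr s) → (b, s) ∈ L)
    (seq : List (B × S)) (hsub : ∀ p ∈ seq, p ∈ L) :
    (∀ v : B ⊕ S,
      ∑ b ∈ Finset.univ.filter (fun b => (linkGraph L).Reachable v (Sum.inl b)),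
          (runSession ⟨D, Sup⟩ seq).dem b
        = ∑ s ∈ Finset.univ.filter (fun s => (linkGraph L).Reachable v (Sum.inr s)),
            (runSession ⟨D, Sup⟩ seq).sup s) ∧
    (∀ b, 0 < (runSession ⟨D, Sup⟩ seq).dem b →
      ∃ s, (b, s) ∈ L ∧ 0 < (runSession ⟨D, Sup⟩ seq).sup s) := by
  have hbal' := fun v => runSession_component_balanced hsub (st := ⟨D, Sup⟩) v (hbal v)
  refine ⟨hbal', fun b hb => ?_⟩
  obtain ⟨s, hs, hsup⟩ := TState.exists_sup_pos (runSession_dem_nonneg hD seq) (hbal' (.inl b))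
    (by simp) hb
  exact ⟨s, hcb b s (Finset.mem_filter.mp hs).2, hsup⟩

/-- Key invariant of the sufficiency proof: if every component is complete
bipartite with component-wise supply equal to demand, then after any prefix of
any trading session each component still has remaining supply equal to
remaining demand, and any buyer with positive remaining demand is linked to a
seller with positive remaining supply. -/
theorem stmt_14 {B S : Type*} [Fintype B] [Fintype S] [DecidableEq B] [DecidableEq S]
    (L : Finset (B × S)) (D : B → ℝ) (Sup : S → ℝ)
    (hD : ∀ b, 0 ≤ D b) (hS : ∀ s, 0 ≤ Sup s)
    (hbal : ∀ v : B ⊕ S,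
      ∑ b ∈ Finset.univ.filter (fun b => (linkGraph L).Reachable v (Sum.inl b)), D b
        = ∑ s ∈ Finset.univ.filter (fun s => (linkGraph L).Reachable v (Sum.inr s)), Sup s)
    (hcb : ∀ b s, (linkGraph L).Reachable (Sum.inl b) (Sum.inr s) → (b, s) ∈ L)
    (seq : List (B × S)) (hnd : seq.Nodup) (hsub : ∀ p ∈ seq, p ∈ L) :
    (∀ v : B ⊕ S,
      ∑ b ∈ Finset.univ.filter (fun b => (linkGraph L).Reachable v (Sum.inl b)),
          (runSession ⟨D, Sup⟩ seq).dem b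
        = ∑ s ∈ Finset.univ.filter (fun s => (linkGraph L).Reachable v (Sum.inr s)),
            (runSession ⟨D, Sup⟩ seq).sup s) ∧
    (∀ b, 0 < (runSession ⟨D, Sup⟩ seq).dem b →
      ∃ s, (b, s) ∈ L ∧ 0 < (runSession ⟨D, Sup⟩ seq).sup s) :=
  stmt_14_general L D Sup hD hbal hcb seq hsub
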